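/- Fix constants k ∈ ℝ and Λ ≤ 0, and reals u₁ < u₂, v₁ < v₂. Let W ⊆ ℝ² be an open set containing D := [u₁,u₂]×[v₁,v₂], let r, Ω : W → ℝ be C² with r > 0 and Ω > 0, and let T_uv, T_uu, T_vv : W → ℝ be continuous with, on D: T_uu ≥ 0, T_vv ≥ 0, 0 ≤ T_uv ≤ √(T_uu·T_vv), and (writing ν = ∂_u r, λ = ∂_v r): (evol1) ∂_u∂_v r = −kΩ²/(4r) − r⁻¹νλ + 4πr T_uv + (1/4)rΩ²Λ; (const2) ∂_u(Ω⁻²ν) = −4πr T_uu Ω⁻²; (const1) ∂_v(Ω⁻²λ) = −4πr T_vv Ω⁻². Suppose moreover ν > 0 and λ > 0 on D. Define m := (r/2)(k + 4Ω⁻²νλ). Then for every (u,v) ∈ D, m(u,v) ≥ inf { m(u',v') : (u',v') ∈ ({u₂}×[v₁,v₂]) ∪ ([u₁,u₂]×{v₂}) }. -/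

import Mathlib

/-!
Differentiating `m` with the Einstein equations gives `∂_u m` and `∂_v m` in terms of the
stress-energy components; the combination `λ ∂_u m + ν ∂_v m` is `≤ 0` by the AM–GM inequality
together with `T_uv ≤ √(T_uu T_vv)` and `Λ ≤ 0`. Thus `m` does not increase along the
future-directed vector `(λ, ν)`. A minimum principle on the rectangle finishes the proof: the
tilted function `m - δ (u + v)` decreases strictly along `(λ, ν)`, so its minimum over the
rectangle lies on the future boundary; then let `δ → 0`.
-/

open Real

/-- Partial derivative with respect to the first (`u`) coordinate. -/
noncomputable def pd1 (f : ℝ × ℝ → ℝ) (p : ℝ × ℝ) : ℝ :=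
  deriv (fun x => f (x, p.2)) p.1

/-- Partial derivative with respect to the second (`v`) coordinate. -/
noncomputable def pd2 (f : ℝ × ℝ → ℝ) (p : ℝ × ℝ) : ℝ :=
  deriv (fun y => f (p.1, y)) p.2

open Filter Set Topology

section PartialDerivatives

variable {f g : ℝ × ℝ → ℝ} {p : ℝ × ℝ}

lemma pd1_eq_fderiv (hf : DifferentiableAt ℝ f p) : pd1 f p = fderiv ℝ f p (1, 0) :=
  (hf.hasFDerivAt.comp_hasDerivAt p.1
    ((hasDerivAt_id p.1).prodMk (hasDerivAt_const p.1 p.2))).deriv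

lemma pd2_eq_fderiv (hf : DifferentiableAt ℝ f p) : pd2 f p = fderiv ℝ f p (0, 1) :=
  (hf.hasFDerivAt.comp_hasDerivAt p.2
    ((hasDerivAt_const p.2 p.1).prodMk (hasDerivAt_id p.2))).deriv

lemma hasDerivAt_pd1 (hf : DifferentiableAt ℝ f p) :
    HasDerivAt (fun x => f (x, p.2)) (pd1 f p) p.1 :=
  (hf.comp p.1 (differentiableAt_id.prodMk (differentiableAt_const p.2))).hasDerivAt

lemma hasDerivAt_pd2 (hf : DifferentiableAt ℝ f p) :
    HasDerivAt (fun y => f (p.1, y)) (pd2 f p) p.2 :=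
  (hf.comp p.2 ((differentiableAt_const p.1).prodMk differentiableAt_id)).hasDerivAt

lemma fderiv_apply_eq_pd (hf : DifferentiableAt ℝ f p) (d : ℝ × ℝ) :
    fderiv ℝ f p d = d.1 * pd1 f p + d.2 * pd2 f p := by
  have hd : d = d.1 • ((1 : ℝ), (0 : ℝ)) + d.2 • ((0 : ℝ), (1 : ℝ)) := by ext <;> simp
  rw [pd1_eq_fderiv hf, pd2_eq_fderiv hf, hd, map_add, map_smul, map_smul]
  simp

lemma Filter.EventuallyEq.pd1_eq (h : f =ᶠ[𝓝 p] g) : pd1 f p = pd1 g p :=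
  (h.comp_tendsto ((continuous_id.prodMk continuous_const).tendsto p.1)).deriv_eq

lemma Filter.EventuallyEq.pd2_eq (h : f =ᶠ[𝓝 p] g) : pd2 f p = pd2 g p :=
  (h.comp_tendsto ((continuous_const.prodMk continuous_id).tendsto p.2)).deriv_eq

lemma fderiv_fderiv_apply (hf : DifferentiableAt ℝ (fderiv ℝ f) p) (v w : ℝ × ℝ) :
    fderiv ℝ (fun q => fderiv ℝ f q w) p v = fderiv ℝ (fderiv ℝ f) p v w := by
  rw [fderiv_clm_apply hf (differentiableAt_const w)]
  simp

namespace ContDiffAt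

lemma differentiableAt_fderiv (hf : ContDiffAt ℝ 2 f p) : DifferentiableAt ℝ (fderiv ℝ f) p :=
  (hf.fderiv_right (m := 1) le_rfl).differentiableAt one_ne_zero

lemma pd1_eventuallyEq (hf : ContDiffAt ℝ 2 f p) : pd1 f =ᶠ[𝓝 p] fun q => fderiv ℝ f q (1, 0) :=
  (hf.eventually (by simp)).mono fun _ hq => pd1_eq_fderiv (hq.differentiableAt two_ne_zero)

lemma pd2_eventuallyEq (hf : ContDiffAt ℝ 2 f p) : pd2 f =ᶠ[𝓝 p] fun q => fderiv ℝ f q (0, 1) :=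
  (hf.eventually (by simp)).mono fun _ hq => pd2_eq_fderiv (hq.differentiableAt two_ne_zero)

lemma differentiableAt_pd1 (hf : ContDiffAt ℝ 2 f p) : DifferentiableAt ℝ (pd1 f) p :=
  (hf.differentiableAt_fderiv.clm_apply (differentiableAt_const _)).congr_of_eventuallyEq
    hf.pd1_eventuallyEq

lemma differentiableAt_pd2 (hf : ContDiffAt ℝ 2 f p) : DifferentiableAt ℝ (pd2 f) p :=
  (hf.differentiableAt_fderiv.clm_apply (differentiableAt_const _)).congr_of_eventuallyEq
    hf.pd2_eventuallyEq

lemma pd2_pd1_eq_pd1_pd2 (hf : ContDiffAt ℝ 2 f p) : pd2 (pd1 f) p = pd1 (pd2 f) p := by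
  have hf' := hf.differentiableAt_fderiv
  rw [hf.pd1_eventuallyEq.pd2_eq, hf.pd2_eventuallyEq.pd1_eq,
    pd2_eq_fderiv (hf'.clm_apply (differentiableAt_const _)),
    pd1_eq_fderiv (hf'.clm_apply (differentiableAt_const _)),
    fderiv_fderiv_apply hf', fderiv_fderiv_apply hf']
  exact hf.isSymmSndFDerivAt (by simp) _ _

end ContDiffAt

end PartialDerivatives

noncomputable def hawkingMass (k : ℝ) (r Ω : ℝ × ℝ → ℝ) (q : ℝ × ℝ) : ℝ :=
  r q / 2 * (k + 4 * (Ω q ^ 2)⁻¹ * pd1 r q * pd2 r q)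

section HawkingMass

variable {k Λ : ℝ} {r Ω Tuv Tuu Tvv : ℝ × ℝ → ℝ} {q : ℝ × ℝ}

lemma differentiableAt_hawkingMass (hr : ContDiffAt ℝ 2 r q) (hΩ : DifferentiableAt ℝ Ω q)
    (hΩq : Ω q ≠ 0) : DifferentiableAt ℝ (hawkingMass k r Ω) q := by
  have := hr.differentiableAt two_ne_zero
  have := hr.differentiableAt_pd1
  have := hr.differentiableAt_pd2
  unfold hawkingMass
  fun_prop (disch := exact pow_ne_zero 2 hΩq)

lemma pd1_hawkingMass (hr : ContDiffAt ℝ 2 r q) (hΩ : DifferentiableAt ℝ Ω q)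
    (hrq : r q ≠ 0) (hΩq : Ω q ≠ 0)
    (hevol1 : pd1 (pd2 r) q = -(k * Ω q ^ 2) / (4 * r q) - (r q)⁻¹ * pd1 r q * pd2 r q
        + 4 * π * r q * Tuv q + (1 / 4) * r q * Ω q ^ 2 * Λ)
    (hconst2 : pd1 (fun q => (Ω q ^ 2)⁻¹ * pd1 r q) q = -(4 * π * r q * Tuu q * (Ω q ^ 2)⁻¹)) :
    pd1 (hawkingMass k r Ω) q = 8 * π * r q ^ 2 * (Ω q ^ 2)⁻¹ * (pd1 r q * Tuv q - pd2 r q * Tuu q)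
      + r q ^ 2 * pd1 r q * Λ / 2 := by
  -- group `Ω⁻² ν`, whose `u`-derivative is given by (const2)
  have hmass : hawkingMass k r Ω =
      fun q => r q / 2 * (k + 4 * ((Ω q ^ 2)⁻¹ * pd1 r q) * pd2 r q) := by
    funext q; simp only [hawkingMass]; ring
  have hw : DifferentiableAt ℝ (fun q => (Ω q ^ 2)⁻¹ * pd1 r q) q :=
    ((hΩ.pow 2).inv (pow_ne_zero 2 hΩq)).mul hr.differentiableAt_pd1
  rw [hmass, pd1]
  refine (((hasDerivAt_pd1 (hr.differentiableAt two_ne_zero)).div_const 2).fun_mul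
    (((hasDerivAt_pd1 hw).const_mul 4).fun_mul (hasDerivAt_pd1 hr.differentiableAt_pd2)
      |>.const_add k)).deriv.trans ?_
  rw [hconst2, hevol1]
  field_simp
  ring

lemma pd2_hawkingMass (hr : ContDiffAt ℝ 2 r q) (hΩ : DifferentiableAt ℝ Ω q)
    (hrq : r q ≠ 0) (hΩq : Ω q ≠ 0)
    (hevol1 : pd1 (pd2 r) q = -(k * Ω q ^ 2) / (4 * r q) - (r q)⁻¹ * pd1 r q * pd2 r q
        + 4 * π * r q * Tuv q + (1 / 4) * r q * Ω q ^ 2 * Λ)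
    (hconst1 : pd2 (fun q => (Ω q ^ 2)⁻¹ * pd2 r q) q = -(4 * π * r q * Tvv q * (Ω q ^ 2)⁻¹)) :
    pd2 (hawkingMass k r Ω) q = 8 * π * r q ^ 2 * (Ω q ^ 2)⁻¹ * (pd2 r q * Tuv q - pd1 r q * Tvv q)
      + r q ^ 2 * pd2 r q * Λ / 2 := by
  have hmass : hawkingMass k r Ω =
      fun q => r q / 2 * (k + 4 * ((Ω q ^ 2)⁻¹ * pd2 r q) * pd1 r q) := by
    funext q; simp only [hawkingMass]; ring
  have hw : DifferentiableAt ℝ (fun q => (Ω q ^ 2)⁻¹ * pd2 r q) q :=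
    ((hΩ.pow 2).inv (pow_ne_zero 2 hΩq)).mul hr.differentiableAt_pd2
  rw [hmass, pd2]
  refine (((hasDerivAt_pd2 (hr.differentiableAt two_ne_zero)).div_const 2).fun_mul
    (((hasDerivAt_pd2 hw).const_mul 4).fun_mul (hasDerivAt_pd2 hr.differentiableAt_pd1)
      |>.const_add k)).deriv.trans ?_
  rw [hconst1, hr.pd2_pd1_eq_pd1_pd2, hevol1]
  field_simp
  ring

end HawkingMass

lemma two_mul_le_of_le_sqrt_mul {ν l Tuv Tuu Tvv : ℝ} (hν : 0 ≤ ν) (hl : 0 ≤ l)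
    (hTuu : 0 ≤ Tuu) (hTvv : 0 ≤ Tvv) (hTuv : Tuv ≤ √(Tuu * Tvv)) :
    2 * (ν * l * Tuv) ≤ l ^ 2 * Tuu + ν ^ 2 * Tvv := by
  calc 2 * (ν * l * Tuv) ≤ 2 * (ν * l * (√Tuu * √Tvv)) := by
        rw [← sqrt_mul hTuu]; gcongr
    _ ≤ l ^ 2 * Tuu + ν ^ 2 * Tvv := by
        nlinarith [sq_nonneg (l * √Tuu - ν * √Tvv), sq_sqrt hTuu, sq_sqrt hTvv]

lemma mass_flux_combination_nonpos {ν l r w Tuv Tuu Tvv Λ : ℝ} (hν : 0 < ν) (hl : 0 < l)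
    (hw : 0 ≤ w) (hTuu : 0 ≤ Tuu) (hTvv : 0 ≤ Tvv) (hTuv : Tuv ≤ √(Tuu * Tvv)) (hΛ : Λ ≤ 0) :
    l * (8 * π * r ^ 2 * w * (ν * Tuv - l * Tuu) + r ^ 2 * ν * Λ / 2)
      + ν * (8 * π * r ^ 2 * w * (l * Tuv - ν * Tvv) + r ^ 2 * l * Λ / 2) ≤ 0 := by
  have hmatter : 8 * π * r ^ 2 * w * (2 * (ν * l * Tuv) - (l ^ 2 * Tuu + ν ^ 2 * Tvv)) ≤ 0 :=
    mul_nonpos_of_nonneg_of_nonpos (by positivity)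
      (sub_nonpos.2 (two_mul_le_of_le_sqrt_mul hν.le hl.le hTuu hTvv hTuv))
  have hvacuum : r ^ 2 * (ν * l) * Λ ≤ 0 := mul_nonpos_of_nonneg_of_nonpos (by positivity) hΛ
  linarith

section FutureBoundary

variable {u₁ u₂ v₁ v₂ : ℝ}

lemma hasFDerivAt_nonneg_of_isMinOn_Icc_prod {g : ℝ × ℝ → ℝ} {g' : ℝ × ℝ →L[ℝ] ℝ} {q d : ℝ × ℝ}
    (hg : HasFDerivAt g g' q) (hmin : IsMinOn g (Icc u₁ u₂ ×ˢ Icc v₁ v₂) q)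
    (hq : q ∈ Icc u₁ u₂ ×ˢ Icc v₁ v₂) (hq₁ : q.1 < u₂) (hq₂ : q.2 < v₂)
    (hd₁ : 0 < d.1) (hd₂ : 0 < d.2) : 0 ≤ g' d := by
  refine hmin.localize.hasFDerivWithinAt_nonneg hg.hasFDerivWithinAt
    (mem_posTangentConeAt_of_frequently_mem (Eventually.frequently ?_))
  have hline : Tendsto (fun t : ℝ => q + t • d) (𝓝[>] 0) (𝓝 q) := by
    refine tendsto_nhdsWithin_of_tendsto_nhds ?_
    exact (by fun_prop : Continuous fun t : ℝ => q + t • d).tendsto' 0 q (by simp)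
  filter_upwards [self_mem_nhdsWithin, hline (prod_mem_nhds (Iio_mem_nhds hq₁)
    (Iio_mem_nhds hq₂))] with t (ht : 0 < t) ⟨hu, hv⟩
  have htd₁ := mul_pos ht hd₁
  have htd₂ := mul_pos ht hd₂
  simp only [mem_Iio, mem_prod, mem_Icc, Prod.fst_add, Prod.snd_add, Prod.smul_fst, Prod.smul_snd,
    smul_eq_mul] at hu hv ⊢
  exact ⟨⟨by linarith [hq.1.1], hu.le⟩, ⟨by linarith [hq.2.1], hv.le⟩⟩

lemma mem_futureBoundary_of_isMinOn {f : ℝ × ℝ → ℝ}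
    (hf : ∀ q ∈ Icc u₁ u₂ ×ˢ Icc v₁ v₂, DifferentiableAt ℝ f q)
    (hdir : ∀ q ∈ Icc u₁ u₂ ×ˢ Icc v₁ v₂, ∃ d : ℝ × ℝ, 0 < d.1 ∧ 0 < d.2 ∧ fderiv ℝ f q d ≤ 0)
    {δ : ℝ} (hδ : 0 < δ) {q : ℝ × ℝ} (hq : q ∈ Icc u₁ u₂ ×ˢ Icc v₁ v₂)
    (hmin : IsMinOn (fun q => f q - δ * (q.1 + q.2)) (Icc u₁ u₂ ×ˢ Icc v₁ v₂) q) :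
    q ∈ ({u₂} : Set ℝ) ×ˢ Icc v₁ v₂ ∪ Icc u₁ u₂ ×ˢ ({v₂} : Set ℝ) := by
  by_contra hS
  have hq₁ : q.1 < u₂ := hq.1.2.lt_of_ne fun h => hS (Or.inl ⟨h, hq.2⟩)
  have hq₂ : q.2 < v₂ := hq.2.2.lt_of_ne fun h => hS (Or.inr ⟨hq.1, h⟩)
  obtain ⟨d, hd₁, hd₂, hfd⟩ := hdir q hq
  have hg := (hf q hq).hasFDerivAt.sub ((hasFDerivAt_fst.add hasFDerivAt_snd).const_mul δ)
  have := hasFDerivAt_nonneg_of_isMinOn_Icc_prod hg hmin hq hq₁ hq₂ hd₁ hd₂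
  simp only [sub_apply, add_apply, smul_apply, ContinuousLinearMap.coe_fst',
    ContinuousLinearMap.coe_snd', smul_eq_mul] at this
  nlinarith [mul_pos hδ (add_pos hd₁ hd₂)]

theorem sInf_image_futureBoundary_le {f : ℝ × ℝ → ℝ}
    (hf : ∀ q ∈ Icc u₁ u₂ ×ˢ Icc v₁ v₂, DifferentiableAt ℝ f q)
    (hdir : ∀ q ∈ Icc u₁ u₂ ×ˢ Icc v₁ v₂, ∃ d : ℝ × ℝ, 0 < d.1 ∧ 0 < d.2 ∧ fderiv ℝ f q d ≤ 0)
    {p : ℝ × ℝ} (hp : p ∈ Icc u₁ u₂ ×ˢ Icc v₁ v₂) :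
    sInf (f '' (({u₂} : Set ℝ) ×ˢ Icc v₁ v₂ ∪ Icc u₁ u₂ ×ˢ ({v₂} : Set ℝ))) ≤ f p := by
  set D := Icc u₁ u₂ ×ˢ Icc v₁ v₂
  set S := ({u₂} : Set ℝ) ×ˢ Icc v₁ v₂ ∪ Icc u₁ u₂ ×ˢ ({v₂} : Set ℝ)
  have hSD : S ⊆ D := by
    rintro q (⟨rfl, hq⟩ | ⟨hq, rfl⟩)
    exacts [⟨⟨hp.1.1.trans hp.1.2, le_rfl⟩, hq⟩, ⟨hq, ⟨hp.2.1.trans hp.2.2, le_rfl⟩⟩]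
  have hcont : ContinuousOn f D := fun q hq => (hf q hq).continuousAt.continuousWithinAt
  have hbdd : BddBelow (f '' S) :=
    (((isCompact_singleton.prod isCompact_Icc).union (isCompact_Icc.prod isCompact_singleton))
      |>.image_of_continuousOn (hcont.mono hSD)).bddBelow
  suffices h : ∀ δ > 0, sInf (f '' S) ≤ f p + δ * (u₂ + v₂ - (p.1 + p.2)) by
    have hlim : Tendsto (fun δ => f p + δ * (u₂ + v₂ - (p.1 + p.2))) (𝓝[>] 0) (𝓝 (f p)) := by
      refine tendsto_nhdsWithin_of_tendsto_nhds ?_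
      exact (by fun_prop : Continuous fun δ : ℝ => f p + δ * (u₂ + v₂ - (p.1 + p.2))).tendsto'
        0 (f p) (by simp)
    exact ge_of_tendsto hlim (eventually_nhdsWithin_of_forall h)
  intro δ hδ
  obtain ⟨q, hq, hmin⟩ := (isCompact_Icc.prod isCompact_Icc).exists_isMinOn ⟨p, hp⟩
    (hcont.sub (by fun_prop : Continuous fun q : ℝ × ℝ => δ * (q.1 + q.2)).continuousOn :
      ContinuousOn (fun q => f q - δ * (q.1 + q.2)) D)
  have hgq : f q - δ * (q.1 + q.2) ≤ f p - δ * (p.1 + p.2) := isMinOn_iff.1 hmin p hp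
  have hqδ : δ * (q.1 + q.2) ≤ δ * (u₂ + v₂) :=
    mul_le_mul_of_nonneg_left (add_le_add hq.1.2 hq.2.2) hδ.le
  calc sInf (f '' S) ≤ f q :=
        csInf_le hbdd ⟨q, mem_futureBoundary_of_isMinOn hf hdir hδ hq hmin, rfl⟩
    _ ≤ f p + δ * (u₂ + v₂ - (p.1 + p.2)) := by linarith

end FutureBoundary

theorem hawking_mass_bounded_below_in_past_general
    (k Λ : ℝ) (hΛ : Λ ≤ 0) (u₁ u₂ v₁ v₂ : ℝ)
    (W : Set (ℝ × ℝ)) (hW : IsOpen W)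
    (hDW : Set.Icc u₁ u₂ ×ˢ Set.Icc v₁ v₂ ⊆ W)
    (r Ω Tuv Tuu Tvv : ℝ × ℝ → ℝ)
    (hr : ContDiffOn ℝ 2 r W) (hΩ : ContDiffOn ℝ 2 Ω W)
    (hrpos : ∀ p ∈ W, 0 < r p) (hΩpos : ∀ p ∈ W, 0 < Ω p)
    (hTuu : ∀ p ∈ Set.Icc u₁ u₂ ×ˢ Set.Icc v₁ v₂, 0 ≤ Tuu p)
    (hTvv : ∀ p ∈ Set.Icc u₁ u₂ ×ˢ Set.Icc v₁ v₂, 0 ≤ Tvv p)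
    (hTuv : ∀ p ∈ Set.Icc u₁ u₂ ×ˢ Set.Icc v₁ v₂,
      0 ≤ Tuv p ∧ Tuv p ≤ Real.sqrt (Tuu p * Tvv p))
    (hevol1 : ∀ p ∈ W, pd1 (pd2 r) p =
      -(k * Ω p ^ 2) / (4 * r p) - (r p)⁻¹ * pd1 r p * pd2 r p
        + 4 * π * r p * Tuv p + (1 / 4) * r p * Ω p ^ 2 * Λ)
    (hconst2 : ∀ p ∈ W, pd1 (fun q => (Ω q ^ 2)⁻¹ * pd1 r q) p =
      -(4 * π * r p * Tuu p * (Ω p ^ 2)⁻¹))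
    (hconst1 : ∀ p ∈ W, pd2 (fun q => (Ω q ^ 2)⁻¹ * pd2 r q) p =
      -(4 * π * r p * Tvv p * (Ω p ^ 2)⁻¹))
    (hnu : ∀ p ∈ Set.Icc u₁ u₂ ×ˢ Set.Icc v₁ v₂, 0 < pd1 r p)
    (hlam : ∀ p ∈ Set.Icc u₁ u₂ ×ˢ Set.Icc v₁ v₂, 0 < pd2 r p) :
    ∀ p ∈ Set.Icc u₁ u₂ ×ˢ Set.Icc v₁ v₂,
      (fun q => r q / 2 * (k + 4 * (Ω q ^ 2)⁻¹ * pd1 r q * pd2 r q)) p ≥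
        sInf ((fun q => r q / 2 * (k + 4 * (Ω q ^ 2)⁻¹ * pd1 r q * pd2 r q)) ''
          (({u₂} : Set ℝ) ×ˢ Set.Icc v₁ v₂ ∪ Set.Icc u₁ u₂ ×ˢ ({v₂} : Set ℝ))) := by
  intro p hp
  have hreg : ∀ q ∈ Set.Icc u₁ u₂ ×ˢ Set.Icc v₁ v₂,
      ContDiffAt ℝ 2 r q ∧ DifferentiableAt ℝ Ω q ∧ Ω q ≠ 0 := fun q hq =>
    ⟨hr.contDiffAt (hW.mem_nhds (hDW hq)),
      (hΩ.contDiffAt (hW.mem_nhds (hDW hq))).differentiableAt two_ne_zero, (hΩpos q (hDW hq)).ne'⟩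
  refine sInf_image_futureBoundary_le (f := hawkingMass k r Ω)
    (fun q hq => differentiableAt_hawkingMass (hreg q hq).1 (hreg q hq).2.1 (hreg q hq).2.2)
    (fun q hq => ⟨(pd2 r q, pd1 r q), hlam q hq, hnu q hq, ?_⟩) hp
  obtain ⟨hrC, hΩd, hΩ0⟩ := hreg q hq
  have hr0 := (hrpos q (hDW hq)).ne'
  rw [fderiv_apply_eq_pd (differentiableAt_hawkingMass hrC hΩd hΩ0),
    pd1_hawkingMass hrC hΩd hr0 hΩ0 (hevol1 q (hDW hq)) (hconst2 q (hDW hq)),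
    pd2_hawkingMass hrC hΩd hr0 hΩ0 (hevol1 q (hDW hq)) (hconst1 q (hDW hq))]
  exact mass_flux_combination_nonpos (hnu q hq) (hlam q hq) (inv_nonneg.2 (sq_nonneg _))
    (hTuu q hq) (hTvv q hq) (hTuv q hq).2 hΛ

/-- Proposition 9.2 (otherprop) in characteristic-rectangle form: for `Λ ≤ 0`, under the
Vlasov energy conditions and `ν, λ > 0`, the Hawking mass at any point of the rectangle
dominates its infimum over the future boundary of the rectangle. -/
theorem hawking_mass_bounded_below_in_past
    (k Λ : ℝ) (hΛ : Λ ≤ 0) (u₁ u₂ v₁ v₂ : ℝ) (hu : u₁ < u₂) (hv : v₁ < v₂)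
    (W : Set (ℝ × ℝ)) (hW : IsOpen W)
    (hDW : Set.Icc u₁ u₂ ×ˢ Set.Icc v₁ v₂ ⊆ W)
    (r Ω Tuv Tuu Tvv : ℝ × ℝ → ℝ)
    (hr : ContDiffOn ℝ 2 r W) (hΩ : ContDiffOn ℝ 2 Ω W)
    (hrpos : ∀ p ∈ W, 0 < r p) (hΩpos : ∀ p ∈ W, 0 < Ω p)
    (hTuvcont : ContinuousOn Tuv W) (hTuucont : ContinuousOn Tuu W)
    (hTvvcont : ContinuousOn Tvv W)
    (hTuu : ∀ p ∈ Set.Icc u₁ u₂ ×ˢ Set.Icc v₁ v₂, 0 ≤ Tuu p)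
    (hTvv : ∀ p ∈ Set.Icc u₁ u₂ ×ˢ Set.Icc v₁ v₂, 0 ≤ Tvv p)
    (hTuv : ∀ p ∈ Set.Icc u₁ u₂ ×ˢ Set.Icc v₁ v₂,
      0 ≤ Tuv p ∧ Tuv p ≤ Real.sqrt (Tuu p * Tvv p))
    (hevol1 : ∀ p ∈ W, pd1 (pd2 r) p =
      -(k * Ω p ^ 2) / (4 * r p) - (r p)⁻¹ * pd1 r p * pd2 r p
        + 4 * π * r p * Tuv p + (1 / 4) * r p * Ω p ^ 2 * Λ)
    (hconst2 : ∀ p ∈ W, pd1 (fun q => (Ω q ^ 2)⁻¹ * pd1 r q) p =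
      -(4 * π * r p * Tuu p * (Ω p ^ 2)⁻¹))
    (hconst1 : ∀ p ∈ W, pd2 (fun q => (Ω q ^ 2)⁻¹ * pd2 r q) p =
      -(4 * π * r p * Tvv p * (Ω p ^ 2)⁻¹))
    (hnu : ∀ p ∈ Set.Icc u₁ u₂ ×ˢ Set.Icc v₁ v₂, 0 < pd1 r p)
    (hlam : ∀ p ∈ Set.Icc u₁ u₂ ×ˢ Set.Icc v₁ v₂, 0 < pd2 r p) :
    ∀ p ∈ Set.Icc u₁ u₂ ×ˢ Set.Icc v₁ v₂,
      (fun q => r q / 2 * (k + 4 * (Ω q ^ 2)⁻¹ * pd1 r q * pd2 r q)) p ≥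
        sInf ((fun q => r q / 2 * (k + 4 * (Ω q ^ 2)⁻¹ * pd1 r q * pd2 r q)) ''
          (({u₂} : Set ℝ) ×ˢ Set.Icc v₁ v₂ ∪ Set.Icc u₁ u₂ ×ˢ ({v₂} : Set ℝ))) :=
  hawking_mass_bounded_below_in_past_general k Λ hΛ u₁ u₂ v₁ v₂ W hW hDW r Ω Tuv Tuu Tvv hr hΩ hrpos
    hΩpos hTuu hTvv hTuv hevol1 hconst2 hconst1 hnu hlam
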